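/- FHR moment function for the Mixed Interactive Hazards (MIH) model (T = 2, equation 7.4). Restrict covariates to the set {x ∈ ℝ^k : 1 + x'δ > 0}. Then for any bounded measurable m : (0,∞) × ℝ^k → ℝ, the function φ(y_0, y_1, y_2, x_1, x_2) = [p_1 − p_2^{r} / Γ(1 + r)] · m(y_0, x_1), where r = (1 + x_1'δ)/(1 + x_2'δ) and Γ is the real Gamma function, satisfies: (ii) for all (y_0, y_1, x_1, x_2, a) with 1 + x_1'δ > 0 and 1 + x_2'δ > 0, ∫₀^∞ φ(y_0, y_1, y_2, x_1, x_2) f_θ(y_2 | y_1, x_2, a) dy_2 = [p_1 − e^{−(1 + x_1'δ)a}] · m(y_0, x_1), which does not depend on x_2; and (i) for all (y_0, x_1, x_2, a) in that region, ∫₀^∞ ∫₀^∞ φ(y_0, y_1, y_2, x_1, x_2) f_θ(y_2 | y_1, x_2, a) f_θ(y_1 | y_0, x_1, a) dy_1 dy_2 = 0. -/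

import Mathlib

/-!
Substituting `t = Λ(y)` turns the MIH density `c λ(y) e^{-c Λ(y)}`, where
`c = e^{γ y₋ + x'β + (1 + x'δ) a}`, into the exponential density `c e^{-ct}` on `(0, ∞)`:
the image of the measure `λ(y) dy` on `(0, ∞)` under `Λ` is Lebesgue measure on `(0, ∞)`,
because `Λ` is continuous, nondecreasing and unbounded with `Λ(0) = 0`. As `p_2 = t E` with
`E / c = e^{-(1 + x_2'δ) a}`, the moment `∫ t^r c e^{-ct} dt = Γ(1 + r) / c^r` gives
`E[p_2^r / Γ(1 + r)] = e^{-(1 + x_1'δ) a}` for `r = (1 + x_1'δ) / (1 + x_2'δ)`, which is (ii).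
The case `r = 1` in period 1 gives `E[p_1] = e^{-(1 + x_1'δ) a}`, so integrating (ii) against
`f_θ(y_1 | y_0, x_1, a)` gives (i).
-/

open MeasureTheory Set

noncomputable section

variable {k : ℕ}

/-- Integrated baseline hazard `Λ(y) = ∫₀^y λ(u) du`. -/
noncomputable def intHaz (lam : ℝ → ℝ) (y : ℝ) : ℝ := ∫ u in Set.Ioc (0:ℝ) y, lam u

/-- Linear index of the MIH model: `γ y₋ + x'β + a + (x'δ) a`. -/
noncomputable def mihLin (γ : ℝ) (β δv : Fin k → ℝ) (ylag : ℝ) (x : Fin k → ℝ)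
    (a : ℝ) : ℝ :=
  γ * ylag + (∑ i, x i * β i) + a + (∑ i, x i * δv i) * a

/-- Conditional duration density of the MIH model:
`f_θ(y | y₋, x, a) = e^{γ y₋ + x'β + a + (x'δ)a} λ_α(y)
  exp(−e^{γ y₋ + x'β + a + (x'δ)a} Λ_α(y))`. -/
noncomputable def mihDensity (lam : ℝ → ℝ) (γ : ℝ) (β δv : Fin k → ℝ)
    (y ylag : ℝ) (x : Fin k → ℝ) (a : ℝ) : ℝ :=
  Real.exp (mihLin γ β δv ylag x a) * lam y *
    Real.exp (-(Real.exp (mihLin γ β δv ylag x a) * intHaz lam y))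

/-- `p_t = Λ_α(y_t) e^{γ y_{t−1} + x_t'β}`. -/
noncomputable def mihP (lam : ℝ → ℝ) (γ : ℝ) (β : Fin k → ℝ) (y ylag : ℝ)
    (x : Fin k → ℝ) : ℝ :=
  intHaz lam y * Real.exp (γ * ylag + ∑ i, x i * β i)

open Filter

namespace MeasureTheory.Measure

theorem ext_of_Iic' {α : Type*} [TopologicalSpace α] {m : MeasurableSpace α}
    [SecondCountableTopology α] [LinearOrder α] [OrderTopology α] [BorelSpace α] [NoMinOrder α]
    (μ ν : Measure α) (hμ : ∀ a, μ (Iic a) ≠ ⊤) (h : ∀ a, μ (Iic a) = ν (Iic a)) : μ = ν := by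
  refine ext_of_Ioc' μ ν
    (fun a b _ => ne_top_of_le_ne_top (hμ b) (measure_mono Ioc_subset_Iic_self)) fun a b hab => ?_
  rw [← Iic_sdiff_Iic, measure_sdiff (Iic_subset_Iic.2 hab.le) nullMeasurableSet_Iic (hμ a),
    measure_sdiff (Iic_subset_Iic.2 hab.le) nullMeasurableSet_Iic (h a ▸ hμ a), h a, h b]

end MeasureTheory.Measure

theorem Continuous.exists_preimage_Iic_eq_Iic {F : ℝ → ℝ} (hF : Continuous F)
    (hmono : Monotone F) (htop : Tendsto F atTop atTop) {t : ℝ} (hne : (F ⁻¹' Iic t).Nonempty) :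
    ∃ s, F s = t ∧ F ⁻¹' Iic t = Iic s := by
  have hbdd : BddAbove (F ⁻¹' Iic t) := by
    obtain ⟨M, hM⟩ := (htop.eventually_gt_atTop t).exists_forall_of_atTop
    exact ⟨M, fun y hy => le_of_not_gt fun hMy => (hM y hMy.le).not_ge hy⟩
  set s := sSup (F ⁻¹' Iic t)
  have hs : F s ≤ t := (isClosed_Iic.preimage hF).csSup_mem hne hbdd
  refine ⟨s, le_antisymm hs ?_, Subset.antisymm (fun y hy => le_csSup hbdd hy)
    fun y hy => (hmono hy).trans hs⟩
  by_contra! hlt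
  obtain ⟨y, hFy, hsy⟩ := ((hF.continuousAt.eventually (gt_mem_nhds hlt)).filter_mono
    nhdsWithin_le_nhds |>.and (self_mem_nhdsWithin (s := Ioi s))).exists
  exact (le_csSup hbdd (show F y ≤ t from hFy.le)).not_gt hsy

theorem map_eq_volume_restrict_Ioi_of_measure_Iic {μ : Measure ℝ} {F : ℝ → ℝ}
    (hF : Continuous F) (hF_nonneg : ∀ y, 0 ≤ F y) {y₀ : ℝ} (hF_y₀ : F y₀ = 0)
    (htop : Tendsto F atTop atTop) (hμ : ∀ y, μ (Iic y) = ENNReal.ofReal (F y)) :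
    μ.map F = volume.restrict (Ioi 0) := by
  have hmono : Monotone F := fun a b hab => by
    have := measure_mono (μ := μ) (Iic_subset_Iic.2 hab)
    rwa [hμ, hμ, ENNReal.ofReal_le_ofReal_iff (hF_nonneg b)] at this
  have hlevel : ∀ t, μ (F ⁻¹' Iic t) = ENNReal.ofReal t := by
    intro t
    rcases lt_or_ge t 0 with ht | ht
    · have : F ⁻¹' Iic t = ∅ :=
        eq_empty_of_forall_notMem fun y hy => ht.not_ge ((hF_nonneg y).trans hy)
      rw [ENNReal.ofReal_of_nonpos ht.le, this, measure_empty]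
    · obtain ⟨s, hs, hpre⟩ := hF.exists_preimage_Iic_eq_Iic hmono htop
        ⟨y₀, show F y₀ ≤ t from hF_y₀ ▸ ht⟩
      rw [hpre, hμ, hs]
  refine Measure.ext_of_Iic' _ _ (fun t => ?_) fun t => ?_ <;>
    rw [Measure.map_apply hF.measurable measurableSet_Iic, hlevel]
  · exact ENNReal.ofReal_ne_top
  · rw [Measure.restrict_apply measurableSet_Iic, inter_comm, Ioi_inter_Iic, Real.volume_Ioc,
      sub_zero]

lemma integral_rpow_mul_exponentialDensity {c r : ℝ} (hc : 0 < c) (hr : -1 < r) :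
    ∫ t in Ioi (0:ℝ), t ^ r * (c * Real.exp (-(c * t))) = Real.Gamma (1 + r) / c ^ r := by
  have h := Real.integral_rpow_mul_exp_neg_mul_Ioi (a := 1 + r) (by linarith) hc
  rw [add_sub_cancel_left] at h
  simp_rw [mul_left_comm _ c]
  rw [integral_const_mul, h, Real.div_rpow zero_le_one hc.le, Real.one_rpow,
    Real.rpow_add hc, Real.rpow_one]
  field_simp

lemma integrableOn_rpow_mul_exponentialDensity {c r : ℝ} (hc : 0 < c) (hr : -1 < r) :
    IntegrableOn (fun t : ℝ => t ^ r * (c * Real.exp (-(c * t)))) (Ioi 0) := by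
  refine IntegrableOn.congr_fun
    ((integrableOn_rpow_mul_exp_neg_mul_rpow hr zero_lt_one hc).const_mul c) (fun t _ => ?_)
    measurableSet_Ioi
  simp only [Real.rpow_one, neg_mul]
  ring

lemma integral_sub_rpow_div_Gamma_mul_exponentialDensity (P : ℝ) {E c r : ℝ} (hE : 0 ≤ E)
    (hc : 0 < c) (hr : -1 < r) :
    ∫ t in Ioi (0:ℝ), (P - (t * E) ^ r / Real.Gamma (1 + r)) * (c * Real.exp (-(c * t))) =
      P - (E / c) ^ r := by
  have hΓ : Real.Gamma (1 + r) ≠ 0 := (Real.Gamma_pos_of_pos (by linarith)).ne'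
  have hmass := integral_rpow_mul_exponentialDensity hc neg_one_lt_zero
  simp only [Real.rpow_zero, one_mul, add_zero, Real.Gamma_one, div_one] at hmass
  have hmass_int := integrableOn_rpow_mul_exponentialDensity hc neg_one_lt_zero
  simp only [Real.rpow_zero, one_mul] at hmass_int
  calc _ = ∫ t in Ioi (0:ℝ), (P * (c * Real.exp (-(c * t))) -
          E ^ r / Real.Gamma (1 + r) * (t ^ r * (c * Real.exp (-(c * t))))) := by
        refine setIntegral_congr_fun measurableSet_Ioi fun t ht => ?_
        rw [Real.mul_rpow (le_of_lt ht) hE]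
        ring
    _ = P - (E / c) ^ r := by
        rw [integral_sub (hmass_int.const_mul P)
            ((integrableOn_rpow_mul_exponentialDensity hc hr).const_mul _),
          integral_const_mul P, hmass, integral_const_mul,
          integral_rpow_mul_exponentialDensity hc hr, Real.div_rpow hE hc.le]
        field_simp

lemma exp_div_exp_mihLin (γ : ℝ) (β δv : Fin k → ℝ) (ylag : ℝ) (x : Fin k → ℝ) (a : ℝ) :
    Real.exp (γ * ylag + ∑ i, x i * β i) / Real.exp (mihLin γ β δv ylag x a) =
      Real.exp (-((1 + ∑ i, x i * δv i) * a)) := by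
  rw [← Real.exp_sub, mihLin]
  ring_nf

section Hazard

variable {lam : ℝ → ℝ} (hmeas : Measurable lam) (hnonneg : ∀ y ∈ Ioi (0:ℝ), 0 ≤ lam y)
  (hint : ∀ y : ℝ, 0 < y → IntegrableOn lam (Ioc 0 y)) (htop : Tendsto (intHaz lam) atTop atTop)

lemma intHaz_of_nonpos {y : ℝ} (hy : y ≤ 0) : intHaz lam y = 0 := by
  simp [intHaz, Ioc_eq_empty (not_lt.2 hy)]

include hnonneg in
lemma intHaz_nonneg (y : ℝ) : 0 ≤ intHaz lam y :=
  setIntegral_nonneg measurableSet_Ioc fun u hu => hnonneg u hu.1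

include hint in
lemma integrableOn_Ioc_zero (y : ℝ) :
    IntegrableOn lam (Ioc 0 y) := by
  rcases le_or_gt y 0 with hy | hy
  · simp [Ioc_eq_empty (not_lt.2 hy)]
  · exact hint y hy

lemma intHaz_eq_intervalIntegral_indicator (y : ℝ) :
    intHaz lam y = ∫ u in (0:ℝ)..y, (Ioi 0).indicator lam u := by
  rcases le_or_gt y 0 with hy | hy
  · simp [intHaz_of_nonpos hy, intervalIntegral.integral_of_ge hy,
      setIntegral_indicator measurableSet_Ioi]
  · rw [intervalIntegral.integral_of_le hy.le, setIntegral_indicator measurableSet_Ioi,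
      inter_eq_left.2 Ioc_subset_Ioi_self, intHaz]

include hint in
lemma continuous_intHaz : Continuous (intHaz lam) := by
  rw [funext intHaz_eq_intervalIntegral_indicator]
  refine intervalIntegral.continuous_primitive (fun a b => ?_) 0
  rw [intervalIntegrable_iff, IntegrableOn, integrable_indicator_iff measurableSet_Ioi,
    IntegrableOn, Measure.restrict_restrict measurableSet_Ioi]
  exact (integrableOn_Ioc_zero hint (max a b)).mono_set fun u hu => ⟨hu.1, hu.2.2⟩

def hazardMeasure (lam : ℝ → ℝ) : Measure ℝ :=
  (volume.restrict (Ioi 0)).withDensity fun y => ENNReal.ofReal (lam y)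

include hnonneg hint in
lemma hazardMeasure_Iic (y : ℝ) :
    hazardMeasure lam (Iic y) = ENNReal.ofReal (intHaz lam y) := by
  rw [hazardMeasure, withDensity_apply _ measurableSet_Iic,
    Measure.restrict_restrict measurableSet_Iic, inter_comm, Ioi_inter_Iic, intHaz,
    ofReal_integral_eq_lintegral_ofReal (integrableOn_Ioc_zero hint y)
      (ae_restrict_of_forall_mem measurableSet_Ioc fun u hu => hnonneg u hu.1)]

include hnonneg hint htop in
lemma map_intHaz_hazardMeasure :
    (hazardMeasure lam).map (intHaz lam) = volume.restrict (Ioi 0) :=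
  map_eq_volume_restrict_Ioi_of_measure_Iic (continuous_intHaz hint) (intHaz_nonneg hnonneg)
    (intHaz_of_nonpos le_rfl) htop (hazardMeasure_Iic hnonneg hint)

include hmeas hnonneg hint htop in
theorem setIntegral_comp_intHaz_mul {g : ℝ → ℝ} (hg : Measurable g) :
    ∫ y in Ioi 0, g (intHaz lam y) * lam y = ∫ t in Ioi 0, g t := by
  calc ∫ y in Ioi 0, g (intHaz lam y) * lam y
        = ∫ y, g (intHaz lam y) ∂hazardMeasure lam := by
        rw [hazardMeasure, integral_withDensity_eq_integral_toReal_smul hmeas.ennreal_ofReal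
          (ae_of_all _ fun _ => ENNReal.ofReal_lt_top)]
        refine setIntegral_congr_fun measurableSet_Ioi fun y hy => ?_
        rw [ENNReal.toReal_ofReal (hnonneg y hy), smul_eq_mul, mul_comm]
    _ = ∫ t, g t ∂(hazardMeasure lam).map (intHaz lam) :=
        (integral_map (continuous_intHaz hint).aemeasurable hg.aestronglyMeasurable).symm
    _ = ∫ t in Ioi 0, g t := by rw [map_intHaz_hazardMeasure hnonneg hint htop]

include hmeas hnonneg hint htop in
theorem integral_sub_rpow_div_Gamma_mul_hazardDensity (P : ℝ) {E c r : ℝ} (hE : 0 ≤ E)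
    (hc : 0 < c) (hr : -1 < r) :
    ∫ y in Ioi 0, (P - (intHaz lam y * E) ^ r / Real.Gamma (1 + r)) *
        (c * lam y * Real.exp (-(c * intHaz lam y))) = P - (E / c) ^ r := by
  rw [← integral_sub_rpow_div_Gamma_mul_exponentialDensity P hE hc hr,
    ← setIntegral_comp_intHaz_mul hmeas hnonneg hint htop
      (g := fun t => (P - (t * E) ^ r / Real.Gamma (1 + r)) * (c * Real.exp (-(c * t))))
      (by fun_prop)]
  exact setIntegral_congr_fun measurableSet_Ioi fun y _ => by ring

variable (γ : ℝ) (β δv : Fin k → ℝ)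

include hmeas hnonneg hint htop in
theorem integral_sub_mihP_rpow_div_Gamma_mul_mihDensity (P ylag : ℝ) (x : Fin k → ℝ) (a : ℝ)
    {r : ℝ} (hr : -1 < r) :
    ∫ y in Ioi 0, (P - mihP lam γ β y ylag x ^ r / Real.Gamma (1 + r)) *
        mihDensity lam γ β δv y ylag x a =
      P - Real.exp (-((1 + ∑ i, x i * δv i) * a)) ^ r := by
  rw [← exp_div_exp_mihLin γ β δv ylag x a]
  exact integral_sub_rpow_div_Gamma_mul_hazardDensity hmeas hnonneg hint htop P
    (Real.exp_pos _).le (Real.exp_pos _) hr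

include hmeas hnonneg hint htop in
theorem integral_mihP_sub_mul_mihDensity (ylag : ℝ) (x : Fin k → ℝ) (a : ℝ) :
    ∫ y in Ioi 0, (mihP lam γ β y ylag x - Real.exp (-((1 + ∑ i, x i * δv i) * a))) *
        mihDensity lam γ β δv y ylag x a = 0 := by
  have h := integral_sub_mihP_rpow_div_Gamma_mul_mihDensity hmeas hnonneg hint htop γ β δv
    (Real.exp (-((1 + ∑ i, x i * δv i) * a))) ylag x a (r := 1) (by norm_num)
  simp only [Real.rpow_one, one_add_one_eq_two, Real.Gamma_two, div_one, sub_self] at h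
  rw [← neg_eq_zero, ← integral_neg]
  exact (setIntegral_congr_fun measurableSet_Ioi fun y _ => by ring).trans h

include hmeas hnonneg hint htop in
theorem integral_mihMoment_mul_mihDensity (P M ylag : ℝ) (x1 x2 : Fin k → ℝ) (a : ℝ)
    (hx1 : 0 < 1 + ∑ i, x1 i * δv i) (hx2 : 0 < 1 + ∑ i, x2 i * δv i) :
    ∫ y in Ioi 0, (P - mihP lam γ β y ylag x2 ^
            ((1 + ∑ i, x1 i * δv i) / (1 + ∑ i, x2 i * δv i)) /
          Real.Gamma (1 + (1 + ∑ i, x1 i * δv i) / (1 + ∑ i, x2 i * δv i))) *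
        M * mihDensity lam γ β δv y ylag x2 a =
      (P - Real.exp (-((1 + ∑ i, x1 i * δv i) * a))) * M := by
  simp_rw [mul_right_comm _ M]
  rw [integral_mul_const, integral_sub_mihP_rpow_div_Gamma_mul_mihDensity hmeas hnonneg hint htop
    γ β δv P ylag x2 a (by linarith [div_pos hx1 hx2]), ← Real.exp_mul]
  congr 3
  field_simp

end Hazard

theorem mih_FHR_moment_general
    (lam : ℝ → ℝ) (hlam_meas : Measurable lam)
    (hlam_pos : ∀ y ∈ Set.Ioi (0:ℝ), 0 < lam y)
    (hlam_int : ∀ y : ℝ, 0 < y → IntegrableOn lam (Set.Ioc 0 y) volume)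
    (hlam_top : Filter.Tendsto (intHaz lam) Filter.atTop Filter.atTop)
    (γ : ℝ) (β δv : Fin k → ℝ)
    (m : ℝ → (Fin k → ℝ) → ℝ) :
    -- condition (ii)
    (∀ (y0 y1 : ℝ) (x1 x2 : Fin k → ℝ) (a : ℝ), 0 < y0 → 0 < y1 →
      0 < 1 + ∑ i, x1 i * δv i → 0 < 1 + ∑ i, x2 i * δv i →
      (∫ y2 in Set.Ioi (0:ℝ),
          (mihP lam γ β y1 y0 x1 -
              mihP lam γ β y2 y1 x2 ^
                  ((1 + ∑ i, x1 i * δv i) / (1 + ∑ i, x2 i * δv i)) /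
                Real.Gamma (1 + (1 + ∑ i, x1 i * δv i) / (1 + ∑ i, x2 i * δv i))) *
            m y0 x1 * mihDensity lam γ β δv y2 y1 x2 a) =
        (mihP lam γ β y1 y0 x1 - Real.exp (-((1 + ∑ i, x1 i * δv i) * a))) * m y0 x1) ∧
    -- condition (i)
    (∀ (y0 : ℝ) (x1 x2 : Fin k → ℝ) (a : ℝ), 0 < y0 →
      0 < 1 + ∑ i, x1 i * δv i → 0 < 1 + ∑ i, x2 i * δv i →
      (∫ y1 in Set.Ioi (0:ℝ), ∫ y2 in Set.Ioi (0:ℝ),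
          (mihP lam γ β y1 y0 x1 -
              mihP lam γ β y2 y1 x2 ^
                  ((1 + ∑ i, x1 i * δv i) / (1 + ∑ i, x2 i * δv i)) /
                Real.Gamma (1 + (1 + ∑ i, x1 i * δv i) / (1 + ∑ i, x2 i * δv i))) *
            m y0 x1 * mihDensity lam γ β δv y2 y1 x2 a *
            mihDensity lam γ β δv y1 y0 x1 a) = 0) := by
  have hnonneg : ∀ y ∈ Ioi (0:ℝ), 0 ≤ lam y := fun y hy => (hlam_pos y hy).le
  refine ⟨fun y0 y1 x1 x2 a _ _ hx1 hx2 => integral_mihMoment_mul_mihDensity hlam_meas hnonneg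
    hlam_int hlam_top γ β δv _ _ _ x1 x2 a hx1 hx2, fun y0 x1 x2 a _ hx1 hx2 => ?_⟩
  calc _ = ∫ y1 in Ioi 0, (mihP lam γ β y1 y0 x1 - Real.exp (-((1 + ∑ i, x1 i * δv i) * a))) *
          mihDensity lam γ β δv y1 y0 x1 a * m y0 x1 := by
        refine setIntegral_congr_fun measurableSet_Ioi fun y1 _ => ?_
        rw [integral_mul_const, integral_mihMoment_mul_mihDensity hlam_meas hnonneg hlam_int
          hlam_top γ β δv _ _ _ x1 x2 a hx1 hx2]
        ring
    _ = 0 := by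
        rw [integral_mul_const, integral_mihP_sub_mul_mihDensity hlam_meas hnonneg hlam_int
          hlam_top, zero_mul]

/-- **FHR moment function for the MIH model (T = 2, equation 7.4).** For covariates
restricted to `{x : 1 + x'δ > 0}` and any bounded measurable `m(y_0, x_1)`, the
function `φ = [p_1 − p_2^r / Γ(1 + r)] m(y_0, x_1)`, `r = (1 + x_1'δ)/(1 + x_2'δ)`,
satisfies (ii): `∫₀^∞ φ f_θ(y_2|y_1,x_2,a) dy_2 = [p_1 − e^{−(1+x_1'δ)a}] m(y_0,x_1)`,
which does not depend on `x_2`; and (i): the double integral of `φ` against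
`f_θ(y_2|y_1,x_2,a) f_θ(y_1|y_0,x_1,a)` is zero. -/
theorem mih_FHR_moment
    (lam : ℝ → ℝ) (hlam_meas : Measurable lam)
    (hlam_pos : ∀ y ∈ Set.Ioi (0:ℝ), 0 < lam y)
    (hlam_int : ∀ y : ℝ, 0 < y → IntegrableOn lam (Set.Ioc 0 y) volume)
    (hlam_top : Filter.Tendsto (intHaz lam) Filter.atTop Filter.atTop)
    (γ : ℝ) (β δv : Fin k → ℝ)
    (m : ℝ → (Fin k → ℝ) → ℝ)
    (hm_meas : Measurable fun p : ℝ × (Fin k → ℝ) => m p.1 p.2)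
    (hm_bdd : ∃ C, ∀ (y0 : ℝ) (x : Fin k → ℝ), |m y0 x| ≤ C) :
    -- condition (ii)
    (∀ (y0 y1 : ℝ) (x1 x2 : Fin k → ℝ) (a : ℝ), 0 < y0 → 0 < y1 →
      0 < 1 + ∑ i, x1 i * δv i → 0 < 1 + ∑ i, x2 i * δv i →
      (∫ y2 in Set.Ioi (0:ℝ),
          (mihP lam γ β y1 y0 x1 -
              mihP lam γ β y2 y1 x2 ^
                  ((1 + ∑ i, x1 i * δv i) / (1 + ∑ i, x2 i * δv i)) /
                Real.Gamma (1 + (1 + ∑ i, x1 i * δv i) / (1 + ∑ i, x2 i * δv i))) *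
            m y0 x1 * mihDensity lam γ β δv y2 y1 x2 a) =
        (mihP lam γ β y1 y0 x1 - Real.exp (-((1 + ∑ i, x1 i * δv i) * a))) * m y0 x1) ∧
    -- condition (i)
    (∀ (y0 : ℝ) (x1 x2 : Fin k → ℝ) (a : ℝ), 0 < y0 →
      0 < 1 + ∑ i, x1 i * δv i → 0 < 1 + ∑ i, x2 i * δv i →
      (∫ y1 in Set.Ioi (0:ℝ), ∫ y2 in Set.Ioi (0:ℝ),
          (mihP lam γ β y1 y0 x1 -
              mihP lam γ β y2 y1 x2 ^
                  ((1 + ∑ i, x1 i * δv i) / (1 + ∑ i, x2 i * δv i)) /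
                Real.Gamma (1 + (1 + ∑ i, x1 i * δv i) / (1 + ∑ i, x2 i * δv i))) *
            m y0 x1 * mihDensity lam γ β δv y2 y1 x2 a *
            mihDensity lam γ β δv y1 y0 x1 a) = 0) :=
  mih_FHR_moment_general lam hlam_meas hlam_pos hlam_int hlam_top γ β δv m
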